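/- For 1 ≤ i ≤ n, every permutation in S_n that is Knuth equivalent to (n, n-1, ..., i+1, 1, 2, ..., i) avoids both the pattern 3412 and the pattern 4231. -/

import Mathlib

/-- One-line notation for an element of `S_n`: a list that is a permutation of `1, …, n`. -/
def IsOneLine (n : ℕ) (w : List ℕ) : Prop :=
  w.Perm ((List.range n).map (· + 1))

/-- `w` and `π` differ by a single elementary Knuth relation (first or second kind,
in either direction). -/
def KnuthStep (w π : List ℕ) : Prop :=
  ∃ u v : List ℕ, ∃ x y z : ℕ, x < y ∧ y < z ∧
    ((w = u ++ y :: x :: z :: v ∧ π = u ++ y :: z :: x :: v) ∨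
     (w = u ++ y :: z :: x :: v ∧ π = u ++ y :: x :: z :: v) ∨
     (w = u ++ x :: z :: y :: v ∧ π = u ++ z :: x :: y :: v) ∨
     (w = u ++ z :: x :: y :: v ∧ π = u ++ x :: z :: y :: v))

/-- Knuth equivalence: the reflexive-transitive closure of elementary Knuth relations. -/
def KnuthEquiv : List ℕ → List ℕ → Prop :=
  Relation.ReflTransGen KnuthStep

/-- `w` contains the pattern `3412`: a subsequence `(a, b, c, d)` with `c < d < a < b`. -/
def Contains3412 (w : List ℕ) : Prop :=
  ∃ a b c d : ℕ, c < d ∧ d < a ∧ a < b ∧ [a, b, c, d].Sublist w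

/-- `w` contains the pattern `4231`: a subsequence `(a, b, c, d)` with `d < b < c < a`. -/
def Contains4231 (w : List ℕ) : Prop :=
  ∃ a b c d : ℕ, d < b ∧ b < c ∧ c < a ∧ [a, b, c, d].Sublist w

/-- The decreasing run `hi, hi - 1, …, lo`. -/
def descFromTo (hi lo : ℕ) : List ℕ :=
  (List.range (hi + 1 - lo)).map (fun i => hi - i)

/-- The increasing run `lo, lo + 1, …, hi`. -/
def ascFromTo (lo hi : ℕ) : List ℕ :=
  (List.range (hi + 1 - lo)).map (fun i => lo + i)

/-- The length of a longest strictly increasing subsequence of `w`. -/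
def lisLen (w : List ℕ) : ℕ :=
  ((w.sublists.filter (fun l => decide (l.IsChain (· < ·)))).map List.length).foldr max 0

/-- The length of a longest strictly decreasing subsequence of `w`. -/
def ldsLen (w : List ℕ) : ℕ :=
  ((w.sublists.filter (fun l => decide (l.IsChain (· > ·)))).map List.length).foldr max 0

/-- The one-line word of the longest element of the Young subgroup attached to a
composition: each consecutive block is reversed.  `s` is the offset already consumed. -/
def blockRevWord : List ℕ → ℕ → List ℕ
  | [], _ => []
  | m :: rest, s => descFromTo (s + m) (s + 1) ++ blockRevWord rest (s + m)

/-!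
Call `w` an `i`-split shuffle if its letters `≤ i` appear in increasing order and its letters
`> i` in decreasing order. The starting word is one. A Knuth move transposes two adjacent
letters `x < z` next to a letter `y` with `x < y < z`; in a split shuffle the triple containing
`y` forces `x ≤ i < z`, and transposing a small and a large letter keeps the word a split
shuffle. Neither `3412` nor `4231` is a split shuffle, whatever the threshold.
-/

namespace List

theorem Pairwise.perm_middle {α : Type*} {R : α → α → Prop} {u v A B : List α}
    (hAB : A.Perm B) (h : (u ++ (A ++ v)).Pairwise R) (hB : B.Pairwise R) :
    (u ++ (B ++ v)).Pairwise R := by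
  simp only [pairwise_append, mem_append, hAB.mem_iff] at h ⊢
  exact ⟨h.1, ⟨hB, h.2.1.2.1, h.2.1.2.2⟩, h.2.2⟩

end List

def SplitOrder (i p q : ℕ) : Prop :=
  (p ≤ i → q ≤ i → p < q) ∧ (i < p → i < q → q < p)

def IsSplitShuffle (i : ℕ) (w : List ℕ) : Prop :=
  w.Pairwise (SplitOrder i)

theorem mem_descFromTo {hi lo a : ℕ} : a ∈ descFromTo hi lo ↔ lo ≤ a ∧ a ≤ hi := by
  simp only [descFromTo, List.mem_map, List.mem_range]
  exact ⟨by omega, fun h => ⟨hi - a, by omega, by omega⟩⟩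

theorem mem_ascFromTo {lo hi a : ℕ} : a ∈ ascFromTo lo hi ↔ lo ≤ a ∧ a ≤ hi := by
  simp only [ascFromTo, List.mem_map, List.mem_range]
  exact ⟨by omega, fun h => ⟨a - lo, by omega, by omega⟩⟩

theorem pairwise_gt_descFromTo (hi lo : ℕ) : (descFromTo hi lo).Pairwise (· > ·) := by
  refine List.pairwise_map.mpr (List.pairwise_lt_range.imp_of_mem ?_)
  intro a b _ hb hab
  simp only [List.mem_range] at hb
  omega

theorem pairwise_lt_ascFromTo (lo hi : ℕ) : (ascFromTo lo hi).Pairwise (· < ·) :=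
  List.pairwise_map.mpr (List.pairwise_lt_range.imp fun hab => by omega)

theorem isSplitShuffle_descFromTo_append_ascFromTo (n i : ℕ) :
    IsSplitShuffle i (descFromTo n (i + 1) ++ ascFromTo 1 i) := by
  refine List.pairwise_append.mpr ⟨?_, ?_, ?_⟩
  · exact (pairwise_gt_descFromTo n (i + 1)).imp_of_mem fun ha _ hab =>
      ⟨fun h => absurd h (by have := mem_descFromTo.mp ha; omega), fun _ _ => hab⟩
  · exact (pairwise_lt_ascFromTo 1 i).imp_of_mem fun ha _ hab =>
      ⟨fun _ _ => hab, fun h => absurd h (by have := mem_ascFromTo.mp ha; omega)⟩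
  · intro a ha b hb
    have := mem_descFromTo.mp ha
    have := mem_ascFromTo.mp hb
    constructor <;> omega

theorem IsSplitShuffle.knuthStep {i : ℕ} {w π : List ℕ} (hw : IsSplitShuffle i w)
    (h : KnuthStep w π) : IsSplitShuffle i π := by
  obtain ⟨u, v, x, y, z, hxy, hyz, h⟩ := h
  have transpose {A B : List ℕ} (hAB : A.Perm B) (hAv : IsSplitShuffle i (u ++ (A ++ v)))
      (hA : A.Pairwise (SplitOrder i) → B.Pairwise (SplitOrder i)) :
      IsSplitShuffle i (u ++ (B ++ v)) :=
    have hsub : A.Sublist (u ++ (A ++ v)) :=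
      (List.sublist_append_left A v).trans (List.sublist_append_right u _)
    hAv.perm_middle hAB (hA (hAv.sublist hsub))
  rcases h with ⟨rfl, rfl⟩ | ⟨rfl, rfl⟩ | ⟨rfl, rfl⟩ | ⟨rfl, rfl⟩ <;>
    [refine transpose (.cons y (.swap z x [])) hw fun hA => ?_;
     refine transpose (.cons y (.swap x z [])) hw fun hA => ?_;
     refine transpose (.swap z x [y]) hw fun hA => ?_;
     refine transpose (.swap x z [y]) hw fun hA => ?_] <;>
    simp only [List.pairwise_cons_cons, List.pairwise_singleton, SplitOrder] at hA ⊢ <;>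
    grind

theorem IsSplitShuffle.not_contains3412 {i : ℕ} {w : List ℕ} (hw : IsSplitShuffle i w) :
    ¬ Contains3412 w := by
  rintro ⟨a, b, c, d, hcd, hda, hab, hs⟩
  have := hw.sublist hs
  simp only [List.pairwise_cons_cons, List.pairwise_singleton, SplitOrder] at this
  omega

theorem IsSplitShuffle.not_contains4231 {i : ℕ} {w : List ℕ} (hw : IsSplitShuffle i w) :
    ¬ Contains4231 w := by
  rintro ⟨a, b, c, d, hdb, hbc, hca, hs⟩
  have := hw.sublist hs
  simp only [List.pairwise_cons_cons, List.pairwise_singleton, SplitOrder] at this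
  omega

theorem IsSplitShuffle.knuthEquiv {i : ℕ} {w w' : List ℕ} (hw : IsSplitShuffle i w)
    (h : KnuthEquiv w w') : IsSplitShuffle i w' := by
  induction h with
  | refl => exact hw
  | tail _ hstep ih => exact ih.knuthStep hstep

theorem stmt7_general (n i : ℕ) (w : List ℕ)
    (hw : KnuthEquiv (descFromTo n (i + 1) ++ ascFromTo 1 i) w) :
    ¬ Contains3412 w ∧ ¬ Contains4231 w := by
  have hsplit := (isSplitShuffle_descFromTo_append_ascFromTo n i).knuthEquiv hw
  exact ⟨hsplit.not_contains3412, hsplit.not_contains4231⟩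

theorem stmt7 (n i : ℕ) (hi : 1 ≤ i) (hin : i ≤ n) (w : List ℕ)
    (hw : KnuthEquiv (descFromTo n (i + 1) ++ ascFromTo 1 i) w) :
    ¬ Contains3412 w ∧ ¬ Contains4231 w :=
  stmt7_general n i w hw
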